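/- Let X ∈ ℝ^{m×n} be a matrix all of whose columns are nonzero, and define the AOL scaling vector s ∈ ℝⁿ by s_i = (Σ_{j=1}^{n} |(XᵀX)_{ij}|)^{−1/2} (well defined since (XᵀX)_{ii} > 0), and let S = diag(s). Then the preconditioned matrix AOL(X) = X·S satisfies S·(XᵀX)·S ⪯ I in the positive semidefinite (Loewner) order; equivalently, the spectral norm of AOL(X) satisfies ‖X·S‖₂ ≤ 1. -/

import Mathlib

open Matrix
open scoped Matrix.Norms.L2Operator MatrixOrder

/-- The spectral norm (`ℓ2 → ℓ2` operator norm) of a real matrix, i.e. its largest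
singular value.  This is Mathlib's scoped L2 operator norm on matrices. -/
noncomputable def matrixSpectralNorm {m n : ℕ} (M : Matrix (Fin m) (Fin n) ℝ) : ℝ := ‖M‖

open Classical in
/-- The unique symmetric positive semidefinite square root of a positive semidefinite
real matrix (junk value `0` if the input is not positive semidefinite). -/
noncomputable def matrixSqrt {n : ℕ} (A : Matrix (Fin n) (Fin n) ℝ) :
    Matrix (Fin n) (Fin n) ℝ :=
  if h : A.PosSemidef then CFC.sqrt A else 0

/-- The polar factor `X (XᵀX)^{-1/2}` of a matrix `X` with full column rank. -/
noncomputable def polarFactor {m n : ℕ} (X : Matrix (Fin m) (Fin n) ℝ) :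
    Matrix (Fin m) (Fin n) ℝ :=
  X * (matrixSqrt (Xᵀ * X))⁻¹

/-- The Frobenius inner product `⟨A, B⟩_F = tr(Aᵀ B)`. -/
noncomputable def frobInner {m n : ℕ} (A B : Matrix (Fin m) (Fin n) ℝ) : ℝ :=
  (Aᵀ * B).trace

/-! By AM–GM, `2 |xᵢ xⱼ| ≤ xᵢ² + xⱼ²`, so for symmetric `A` the quadratic form `xᵀ A x` is at
most `∑ᵢ xᵢ² ∑ⱼ |Aᵢⱼ|` (a Schur test). Substituting `x = S y`, the AOL scaling makes every weight
`sᵢ² ∑ⱼ |Aᵢⱼ|` at most one, whence `S A S ⪯ I` for `A = XᵀX`. As `(XS)ᵀ(XS) = S A S`, this says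
`‖XS y‖² ≤ ‖y‖²` for every `y`. -/

open scoped ComplexOrder

namespace Matrix

variable {m n : Type*} [Fintype m] [Fintype n]

theorem dotProduct_mulVec_le_sum_sq_mul_sum_abs {A : Matrix n n ℝ} (hA : A.IsSymm)
    (x : n → ℝ) : x ⬝ᵥ (A *ᵥ x) ≤ ∑ i, x i ^ 2 * ∑ j, |A i j| := by
  have hswap : ∑ i, ∑ j, |A i j| * x j ^ 2 = ∑ i, ∑ j, |A i j| * x i ^ 2 := by
    rw [Finset.sum_comm]
    simp_rw [hA.apply]
  calc x ⬝ᵥ (A *ᵥ x) = ∑ i, ∑ j, A i j * (x i * x j) := by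
        simp only [dotProduct, mulVec, Finset.mul_sum]
        exact Finset.sum_congr rfl fun i _ => Finset.sum_congr rfl fun j _ => by ring
    _ ≤ ∑ i, ∑ j, |A i j| * ((x i ^ 2 + x j ^ 2) / 2) := by
        refine Finset.sum_le_sum fun i _ => Finset.sum_le_sum fun j _ => ?_
        calc A i j * (x i * x j) ≤ |A i j| * |x i * x j| := by
              rw [← abs_mul]; exact le_abs_self _
          _ ≤ |A i j| * ((x i ^ 2 + x j ^ 2) / 2) := by
              gcongr
              rw [abs_mul]
              nlinarith [sq_nonneg (|x i| - |x j|), sq_abs (x i), sq_abs (x j)]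
    _ = (∑ i, ∑ j, |A i j| * x i ^ 2 + ∑ i, ∑ j, |A i j| * x j ^ 2) / 2 := by
        simp only [mul_add, add_div, mul_div_assoc, Finset.sum_add_distrib, Finset.sum_div]
    _ = ∑ i, x i ^ 2 * ∑ j, |A i j| := by
        rw [hswap, add_self_div_two]
        simp only [Finset.mul_sum, mul_comm]

theorem posSemidef_one_sub_diagonal_mul_mul_diagonal [DecidableEq n] {A : Matrix n n ℝ}
    (hA : A.IsSymm) {s : n → ℝ} (hs : ∀ i, s i ^ 2 * ∑ j, |A i j| ≤ 1) :
    (1 - diagonal s * A * diagonal s).PosSemidef := by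
  have hD : (diagonal s)ᵀ = diagonal s := diagonal_transpose s
  refine .of_dotProduct_mulVec_nonneg ?_ fun x => ?_
  · refine isHermitian_iff_isSymm.mpr (isSymm_one.sub ?_)
    rw [IsSymm, transpose_mul, transpose_mul, hD, hA.eq, Matrix.mul_assoc]
  · have hquad : x ⬝ᵥ ((diagonal s * A * diagonal s) *ᵥ x)
        = (diagonal s *ᵥ x) ⬝ᵥ (A *ᵥ (diagonal s *ᵥ x)) := by
      rw [← mulVec_mulVec, ← mulVec_mulVec, dotProduct_mulVec, ← hD, vecMul_transpose, hD]
    have hbound : ∑ i, (diagonal s *ᵥ x) i ^ 2 * ∑ j, |A i j| ≤ x ⬝ᵥ x := by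
      simp only [mulVec_diagonal, dotProduct]
      refine Finset.sum_le_sum fun i _ => ?_
      calc (s i * x i) ^ 2 * ∑ j, |A i j| = x i ^ 2 * (s i ^ 2 * ∑ j, |A i j|) := by ring
        _ ≤ x i * x i := by nlinarith [hs i, sq_nonneg (x i)]
    rw [star_trivial, sub_mulVec, one_mulVec, dotProduct_sub, sub_nonneg, hquad]
    exact (dotProduct_mulVec_le_sum_sq_mul_sum_abs hA _).trans hbound

theorem l2_opNorm_le_one_of_posSemidef_one_sub {𝕜 : Type*} [RCLike 𝕜] [DecidableEq n]
    {M : Matrix m n 𝕜} (hM : (1 - Mᴴ * M).PosSemidef) : ‖M‖ ≤ 1 := by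
  rw [l2_opNorm_def]
  refine ContinuousLinearMap.opNorm_le_bound _ zero_le_one fun x => ?_
  set y := toEuclideanLin M x
  show ‖y‖ ≤ 1 * ‖x‖
  have hy : y.ofLp = M *ᵥ x.ofLp := by simp [y, ofLp_toLpLin, toLin'_apply]
  have key : (‖y‖ : 𝕜) ^ 2 ≤ (‖x‖ : 𝕜) ^ 2 := by
    have := hM.dotProduct_mulVec_nonneg x.ofLp
    rw [sub_mulVec, one_mulVec, dotProduct_sub, sub_nonneg, ← mulVec_mulVec, dotProduct_mulVec,
      ← star_mulVec, ← hy] at this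
    rwa [← inner_self_eq_norm_sq_to_K, ← inner_self_eq_norm_sq_to_K,
      EuclideanSpace.inner_eq_star_dotProduct, EuclideanSpace.inner_eq_star_dotProduct,
      dotProduct_comm, dotProduct_comm x.ofLp]
  rw [one_mul]
  rw [← RCLike.ofReal_pow, ← RCLike.ofReal_pow, RCLike.ofReal_le_ofReal] at key
  exact pow_le_pow_iff_left₀ (norm_nonneg _) (norm_nonneg _) two_ne_zero |>.mp key

end Matrix

-- Also true at `t = 0`, where Lean's `0 ^ (-1/2)` is `0`.
theorem Real.rpow_neg_half_sq_mul_le_one {t : ℝ} (ht : 0 ≤ t) :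
    (t ^ (-(1 / 2 : ℝ))) ^ 2 * t ≤ 1 := by
  rcases ht.eq_or_lt with rfl | ht
  · simp
  · rw [← Real.rpow_natCast, ← Real.rpow_mul ht.le]
    norm_num [Real.rpow_neg_one, ht.ne']

theorem stmt_7_general {m n : ℕ} (X : Matrix (Fin m) (Fin n) ℝ)
    (s : Fin n → ℝ) (hs : ∀ i, s i = (∑ j, |(Xᵀ * X) i j|) ^ (-(1 / 2 : ℝ))) :
    let S : Matrix (Fin n) (Fin n) ℝ := Matrix.diagonal s
    ((1 : Matrix (Fin n) (Fin n) ℝ) - S * (Xᵀ * X) * S).PosSemidef ∧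
      matrixSpectralNorm (X * S) ≤ 1 := by
  intro S
  have hsymm : (Xᵀ * X).IsSymm := by simp [IsSymm]
  have hrow : ∀ i, s i ^ 2 * ∑ j, |(Xᵀ * X) i j| ≤ 1 := fun i => by
    rw [hs]
    exact Real.rpow_neg_half_sq_mul_le_one (Finset.sum_nonneg fun j _ => abs_nonneg _)
  have hpsd := posSemidef_one_sub_diagonal_mul_mul_diagonal hsymm hrow
  have hgram : (X * S)ᴴ * (X * S) = S * (Xᵀ * X) * S := by
    rw [conjTranspose_eq_transpose_of_trivial, transpose_mul, diagonal_transpose,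
      Matrix.mul_assoc, ← Matrix.mul_assoc Xᵀ, ← Matrix.mul_assoc]
  exact ⟨hpsd, l2_opNorm_le_one_of_posSemidef_one_sub (hgram ▸ hpsd)⟩

/-- AOL preconditioning yields a spectral-norm contraction: with
`s i = (∑ j, |(XᵀX) i j|)^{-1/2}` and `S = diagonal s`, one has
`S (XᵀX) S ⪯ I` in the Loewner order, equivalently `‖X·S‖₂ ≤ 1`. -/
theorem stmt_7 {m n : ℕ} (X : Matrix (Fin m) (Fin n) ℝ)
    (hcol : ∀ j : Fin n, (fun i => X i j) ≠ 0)
    (s : Fin n → ℝ) (hs : ∀ i, s i = (∑ j, |(Xᵀ * X) i j|) ^ (-(1 / 2 : ℝ))) :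
    let S : Matrix (Fin n) (Fin n) ℝ := Matrix.diagonal s
    ((1 : Matrix (Fin n) (Fin n) ℝ) - S * (Xᵀ * X) * S).PosSemidef ∧
      matrixSpectralNorm (X * S) ≤ 1 :=
  stmt_7_general X s hs
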